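/- arXiv:2401.02180 — 7 statements merged into one kernel-verified Lean document; each statement's English description precedes it below -/
import Mathlib

section
/- The map (k, j) ↦ γ(k,j) := ι_I⁻¹(3·ι_{ᵏI*}(j) + ι₃(k) − (3,…,3)), defined on pairs with k ∈ {1,…,3^d} and j ∈ {1,…,∏_w ⌊(I_w − ι₃(k)_w + 3)/3⌋}, is a bijection onto {1,…,∏_w I_w}. Hence every cell belongs to exactly one checkerboard pattern. -/
def prodIio {d : ℕ} (I : Fin d → ℕ) (l : Fin d) : ℕ := ∏ t ∈ Finset.Iio l, I t

/-- vectorial index of a scalar index `j` (mixed-radix digits, offset by 1). -/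
def iotaVec {d : ℕ} (I : Fin d → ℕ) (j : ℕ) (l : Fin d) : ℕ :=
  if l.val = d - 1 then (j - 1) / prodIio I l + 1
  else (j - 1) / prodIio I l - (j - 1) / (prodIio I l * I l) * I l + 1

/-- scalar index of a vectorial index. -/
def iotaInv {d : ℕ} (I : Fin d → ℕ) (v : Fin d → ℕ) : ℕ :=
  1 + ∑ l, (v l - 1) * prodIio I l

def iota3 (d : ℕ) (k : ℕ) : Fin d → ℕ := iotaVec (fun _ => 3) k

def kIstar {d : ℕ} (I : Fin d → ℕ) (k : ℕ) (w : Fin d) : ℕ := (I w + 3 - iota3 d k w) / 3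

def gamma {d : ℕ} (I : Fin d → ℕ) (k j : ℕ) : ℕ :=
  iotaInv I (fun w => 3 * iotaVec (kIstar I k) j w + iota3 d k w - 3)

def betaVec {d : ℕ} (I : Fin d → ℕ) (t l : ℕ) (w : Fin d) : ℕ :=
  iotaVec I t w + iota3 d l w - 2

def betaDef {d : ℕ} (I : Fin d → ℕ) (t l : ℕ) : Prop :=
  ∀ w, 1 ≤ betaVec I t l w ∧ betaVec I t l w ≤ I w

def beta {d : ℕ} (I : Fin d → ℕ) (t l : ℕ) : ℕ := iotaInv I (betaVec I t l)

/-
`gamma I k j` is the composite of `(k, j) ↦ (a, b) := (ι₃ k, ι_{ᵏI*} j)`, of `(a, b) ↦ 3 b + a - 3`,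
and of `ι_I⁻¹`. For every radix vector `J`, the maps `ι_J` and `ι_J⁻¹` are mutually inverse
bijections between `{1, …, ∏ J}` and the box `∏_w [1, J_w]`: shifted by one, they are Mathlib's
mixed-radix equivalence `finPiFinEquiv`. Since `ᵏI*` depends on `k` only through `a = ι₃ k`, the
first map is a bijection onto the pairs `a ∈ [1, 3]^d`, `b ∈ ∏_w [1, ⌊(I_w + 3 - a_w) / 3⌋]`, and
division with remainder by 3 matches these pairs coordinatewise with the box `∏_w [1, I_w]`.
-/
def indexBox {d : ℕ} (I : Fin d → ℕ) : Set (Fin d → ℕ) := Set.univ.pi fun w => Set.Icc 1 (I w)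

section MixedRadix

variable {d : ℕ} (I : Fin d → ℕ)

lemma mem_indexBox {v : Fin d → ℕ} : v ∈ indexBox I ↔ ∀ w, 1 ≤ v w ∧ v w ≤ I w := by
  simp only [indexBox, Set.mem_univ_pi, Set.mem_Icc]

lemma prodIio_eq_prod_castLE (l : Fin d) :
    prodIio I l = ∏ j : Fin l, I (Fin.castLE l.is_lt.le j) := by
  have hl : l = (Fin.last l).castLE l.is_lt := Fin.ext rfl
  rw [prodIio, hl, Fin.prod_Iio_castLE, Fin.Iio_last_eq_map, Finset.prod_map]
  rfl

lemma prodIio_mul_of_val_eq (l : Fin d) (hl : l.val = d - 1) :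
    prodIio I l * I l = ∏ w, I w := by
  rw [prodIio, mul_comm, ← Finset.prod_insert Finset.notMem_Iio_self, Finset.Iio_insert]
  congr 1
  ext t
  simp only [Finset.mem_Iic, Finset.mem_univ, iff_true, Fin.le_def]
  omega

lemma iotaVec_eq_finPiFinEquiv_symm {j : ℕ} (hj : j - 1 < ∏ w, I w) (l : Fin d) :
    iotaVec I j l = (finPiFinEquiv.symm ⟨j - 1, hj⟩ l : ℕ) + 1 := by
  have hP : 0 < prodIio I l := Finset.prod_pos fun t _ =>
    Nat.pos_of_ne_zero (Finset.prod_ne_zero_iff.mp hj.ne_bot t (Finset.mem_univ t))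
  change _ = (j - 1) / (∏ t : Fin l, I (Fin.castLE l.is_lt.le t)) % I l + 1
  rw [← prodIio_eq_prod_castLE, iotaVec]
  split_ifs with hl
  · -- the last digit carries no reduction modulo `I l`, but it is already `< I l`
    have hlt : (j - 1) / prodIio I l < I l := by
      rwa [Nat.div_lt_iff_lt_mul hP, mul_comm, prodIio_mul_of_val_eq I l hl]
    rw [Nat.mod_eq_of_lt hlt]
  · rw [Nat.mod_eq_sub_mul_div, Nat.div_div_eq_div_mul, mul_comm (I l)]

lemma iotaInv_add_one (y : ∀ w, Fin (I w)) :
    iotaInv I (fun w => y w + 1) = finPiFinEquiv y + 1 := by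
  simp only [iotaInv, Nat.add_sub_cancel, finPiFinEquiv_apply, prodIio_eq_prod_castLE]
  ring

lemma mem_indexBox_iff_exists_fin {v : Fin d → ℕ} :
    v ∈ indexBox I ↔ ∃ y : ∀ w, Fin (I w), v = fun w => (y w : ℕ) + 1 := by
  constructor
  · intro hv
    rw [mem_indexBox] at hv
    refine ⟨fun w => ⟨v w - 1, by have := hv w; omega⟩, funext fun w => ?_⟩
    have := hv w
    dsimp only
    omega
  · rintro ⟨y, rfl⟩ w -
    exact ⟨Nat.le_add_left 1 _, (y w).is_lt⟩

lemma invOn_iotaInv_iotaVec :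
    Set.InvOn (iotaInv I) (iotaVec I) (Set.Icc 1 (∏ w, I w)) (indexBox I) := by
  constructor
  · rintro j ⟨hj1, hj2⟩
    have hj : j - 1 < ∏ w, I w := by omega
    rw [funext (iotaVec_eq_finPiFinEquiv_symm I hj), iotaInv_add_one, Equiv.apply_symm_apply]
    simp only
    omega
  · intro v hv
    obtain ⟨y, rfl⟩ := (mem_indexBox_iff_exists_fin I).mp hv
    funext l
    have hy : (⟨finPiFinEquiv y + 1 - 1, by simp⟩ : Fin (∏ w, I w)) = finPiFinEquiv y :=
      Fin.ext (by simp)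
    rw [iotaInv_add_one, iotaVec_eq_finPiFinEquiv_symm I (by simp), hy, Equiv.symm_apply_apply]

lemma mapsTo_iotaVec : Set.MapsTo (iotaVec I) (Set.Icc 1 (∏ w, I w)) (indexBox I) := by
  rintro j ⟨hj1, hj2⟩
  rw [mem_indexBox_iff_exists_fin]
  exact ⟨_, funext (iotaVec_eq_finPiFinEquiv_symm I (by omega))⟩

lemma mapsTo_iotaInv : Set.MapsTo (iotaInv I) (indexBox I) (Set.Icc 1 (∏ w, I w)) := by
  intro v hv
  obtain ⟨y, rfl⟩ := (mem_indexBox_iff_exists_fin I).mp hv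
  rw [iotaInv_add_one]
  exact ⟨by omega, (finPiFinEquiv y).is_lt⟩

lemma bijOn_iotaVec : Set.BijOn (iotaVec I) (Set.Icc 1 (∏ w, I w)) (indexBox I) :=
  (invOn_iotaInv_iotaVec I).bijOn (mapsTo_iotaVec I) (mapsTo_iotaInv I)

lemma bijOn_iotaInv : Set.BijOn (iotaInv I) (indexBox I) (Set.Icc 1 (∏ w, I w)) :=
  (invOn_iotaInv_iotaVec I).symm.bijOn (mapsTo_iotaInv I) (mapsTo_iotaVec I)

end MixedRadix

lemma Set.BijOn.dprodMap {α β γ δ : Type*} {f : α → γ} {g : α → β → δ} {s : Set α}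
    {t : α → Set β} {s' : Set γ} {t' : γ → Set δ} (hf : Set.BijOn f s s')
    (hg : ∀ a ∈ s, Set.BijOn (g a) (t a) (t' (f a))) :
    Set.BijOn (fun p : α × β => (f p.1, g p.1 p.2)) {p | p.1 ∈ s ∧ p.2 ∈ t p.1}
      {q | q.1 ∈ s' ∧ q.2 ∈ t' q.1} := by
  refine ⟨fun p ⟨h1, h2⟩ => ⟨hf.mapsTo h1, (hg _ h1).mapsTo h2⟩, ?_, ?_⟩
  · rintro ⟨a, b⟩ ⟨ha, hb⟩ ⟨a', b'⟩ ⟨ha', hb'⟩ h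
    simp only [Prod.mk.injEq] at h ⊢
    obtain rfl := hf.injOn ha ha' h.1
    exact ⟨rfl, (hg a ha).injOn hb hb' h.2⟩
  · rintro ⟨c, e⟩ ⟨hc, he⟩
    obtain ⟨a, ha, rfl⟩ := hf.surjOn hc
    obtain ⟨b, hb, rfl⟩ := (hg a ha).surjOn he
    exact ⟨(a, b), ⟨ha, hb⟩, rfl⟩

-- Coordinatewise division with remainder by 3: `v - 1 = 3 * (b - 1) + (a - 1)`.
lemma bijOn_three_mul_add {d : ℕ} (I : Fin d → ℕ) :
    Set.BijOn (fun q : (Fin d → ℕ) × (Fin d → ℕ) => fun w => 3 * q.2 w + q.1 w - 3)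
      {q | q.1 ∈ indexBox (fun _ => 3) ∧ q.2 ∈ indexBox (fun w => (I w + 3 - q.1 w) / 3)}
      (indexBox I) := by
  refine Set.InvOn.bijOn
    (f' := fun v => (fun w => (v w - 1) % 3 + 1, fun w => (v w - 1) / 3 + 1)) ⟨?_, ?_⟩ ?_ ?_
  · rintro ⟨a, b⟩ ⟨ha, hb⟩
    simp only [mem_indexBox] at ha hb
    ext w <;> (dsimp only; have := ha w; have := hb w; omega)
  · intro v hv
    rw [mem_indexBox] at hv
    funext w
    dsimp only
    have := hv w
    omega
  · rintro ⟨a, b⟩ ⟨ha, hb⟩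
    simp only [mem_indexBox] at ha hb ⊢
    intro w
    have := ha w; have := hb w
    omega
  · intro v hv
    simp only [mem_indexBox, Set.mem_ofPred_eq] at hv ⊢
    constructor <;> (intro w; have := hv w; omega)

theorem stmt9_general (d : ℕ) (I : Fin d → ℕ) :
    Set.BijOn (fun p : ℕ × ℕ => gamma I p.1 p.2)
      {p : ℕ × ℕ | (1 ≤ p.1 ∧ p.1 ≤ 3 ^ d) ∧ 1 ≤ p.2 ∧ p.2 ≤ ∏ w, kIstar I p.1 w}
      (Set.Icc 1 (∏ w, I w)) := by
  have hk : Set.BijOn (iota3 d) (Set.Icc 1 (3 ^ d)) (indexBox fun _ => 3) := by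
    have h3 := bijOn_iotaVec (fun _ : Fin d => 3)
    rwa [Finset.prod_const, Finset.card_univ, Fintype.card_fin] at h3
  have hkj : Set.BijOn (fun p : ℕ × ℕ => (iota3 d p.1, iotaVec (kIstar I p.1) p.2))
      {p | p.1 ∈ Set.Icc 1 (3 ^ d) ∧ p.2 ∈ Set.Icc 1 (∏ w, kIstar I p.1 w)}
      {q | q.1 ∈ indexBox (fun _ => 3) ∧ q.2 ∈ indexBox fun w => (I w + 3 - q.1 w) / 3} :=
    hk.dprodMap (t' := fun a => indexBox fun w => (I w + 3 - a w) / 3)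
      fun k _ => bijOn_iotaVec (kIstar I k)
  exact (bijOn_iotaInv I).comp ((bijOn_three_mul_add I).comp hkj)

theorem stmt9 (d : ℕ) (hd : 1 ≤ d) (I : Fin d → ℕ) (hI : ∀ w, 1 ≤ I w) :
    Set.BijOn (fun p : ℕ × ℕ => gamma I p.1 p.2)
      {p : ℕ × ℕ | (1 ≤ p.1 ∧ p.1 ≤ 3 ^ d) ∧ 1 ≤ p.2 ∧ p.2 ≤ ∏ w, kIstar I p.1 w}
      (Set.Icc 1 (∏ w, I w)) :=
  stmt9_general d I
end

section
/- Fix d, r_c > 0, D_min ∈ ℝ^d, and I ∈ ℕ_{>0}^d. Suppose a particle's old position x¹ satisfies ι_I(w) = ⌊(x¹ − D_min)/r_c⌋ + 1̲ (it belongs to cell w) and its new position x² satisfies |x² − x¹| ≤ r_c (Euclidean norm). Then the vector α̲ := ⌊(x² − D_min)/r_c⌋ − ι_I(w) + 3̲ has all components in {1,2,3}, so α := ι₃⁻¹(α̲) ∈ {1,…,3^d}. That is, after moving at most r_c, the particle lies in one of the 3^d storage compartments (the cell itself or a direct neighbor). -/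
/-!
Moving by at most `r_c` in Euclidean norm moves every coordinate by at most `r_c`, so each
scaled coordinate `(x l - D_min l) / r_c` changes by at most `1` and its floor by at most `1`.
Hence every digit of `α̲` lies in `{1, 2, 3}`, and a vector of base-3 digits in `{1, 2, 3}` has
scalar index in `{1, …, 3^d}` because `1 + ∑_{l < d} 2 · 3^l = 3^d`.
-/

theorem Int.floor_mem_Icc_of_abs_sub_le_one {s t : ℝ} (h : |s - t| ≤ 1) :
    ⌊t⌋ - 1 ≤ ⌊s⌋ ∧ ⌊s⌋ ≤ ⌊t⌋ + 1 := by
  obtain ⟨hlo, hhi⟩ := abs_le.mp h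
  constructor
  · calc ⌊t⌋ - 1 = ⌊t - (1 : ℤ)⌋ := (Int.floor_sub_intCast t 1).symm
      _ ≤ ⌊s⌋ := Int.floor_le_floor (by push_cast; linarith)
  · calc ⌊s⌋ ≤ ⌊t + (1 : ℤ)⌋ := Int.floor_le_floor (by push_cast; linarith)
      _ = ⌊t⌋ + 1 := Int.floor_add_intCast t 1

theorem Int.floor_div_mem_Icc_of_abs_sub_le {a b c r : ℝ} (hr : 0 < r) (h : |a - b| ≤ r) :
    ⌊(b - c) / r⌋ - 1 ≤ ⌊(a - c) / r⌋ ∧ ⌊(a - c) / r⌋ ≤ ⌊(b - c) / r⌋ + 1 := by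
  apply Int.floor_mem_Icc_of_abs_sub_le_one
  rw [← sub_div, sub_sub_sub_cancel_right, abs_div, abs_of_pos hr]
  exact (div_le_one hr).mpr h

theorem prodIio_const {d : ℕ} (k : ℕ) (l : Fin d) : prodIio (fun _ => k) l = k ^ l.val := by
  simp [prodIio, Fin.card_Iio]

theorem one_le_iotaInv {d : ℕ} (I : Fin d → ℕ) (v : Fin d → ℕ) : 1 ≤ iotaInv I v :=
  Nat.le_add_right _ _

theorem iotaInv_const_le_pow {d : ℕ} (k : ℕ) (v : Fin d → ℕ) (hv : ∀ l, v l ≤ k + 1) :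
    iotaInv (fun _ => k + 1) v ≤ (k + 1) ^ d :=
  calc iotaInv (fun _ => k + 1) v
      ≤ 1 + ∑ l : Fin d, k * (k + 1) ^ l.val := by
        unfold iotaInv
        gcongr 1 + ∑ l : Fin d, ?_ with l
        rw [prodIio_const]
        gcongr
        exact Nat.sub_le_of_le_add (hv l)
    _ = (k + 1) ^ d := by
        rw [← Finset.mul_sum, Fin.sum_univ_eq_sum_range (fun i => (k + 1) ^ i), mul_comm,
          add_comm, geom_sum_mul_add]

theorem stmt12_general (d : ℕ) (rc : ℝ) (hrc : 0 < rc) (Dmin : Fin d → ℝ)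
    (I : Fin d → ℕ) (w : ℕ)
    (x1 x2 : EuclideanSpace ℝ (Fin d))
    (hcell : ∀ l, (iotaVec I w l : ℤ) = ⌊(x1 l - Dmin l) / rc⌋ + 1)
    (hmove : ‖x2 - x1‖ ≤ rc) :
    (∀ l, 1 ≤ ⌊(x2 l - Dmin l) / rc⌋ - (iotaVec I w l : ℤ) + 3 ∧
        ⌊(x2 l - Dmin l) / rc⌋ - (iotaVec I w l : ℤ) + 3 ≤ 3) ∧
    1 ≤ iotaInv (fun _ : Fin d => 3)
        (fun l => (⌊(x2 l - Dmin l) / rc⌋ - (iotaVec I w l : ℤ) + 3).toNat) ∧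
    iotaInv (fun _ : Fin d => 3)
        (fun l => (⌊(x2 l - Dmin l) / rc⌋ - (iotaVec I w l : ℤ) + 3).toNat) ≤ 3 ^ d := by
  have digit_mem : ∀ l, 1 ≤ ⌊(x2 l - Dmin l) / rc⌋ - (iotaVec I w l : ℤ) + 3 ∧
      ⌊(x2 l - Dmin l) / rc⌋ - (iotaVec I w l : ℤ) + 3 ≤ 3 := by
    intro l
    have hcoord : |x2 l - x1 l| ≤ rc := by
      rw [← Real.dist_eq]
      exact (PiLp.dist_apply_le x2 x1 l).trans ((dist_eq_norm x2 x1).trans_le hmove)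
    have := Int.floor_div_mem_Icc_of_abs_sub_le (c := Dmin l) hrc hcoord
    have := hcell l
    omega
  refine ⟨digit_mem, one_le_iotaInv _ _, iotaInv_const_le_pow 2 _ fun l => ?_⟩
  have := (digit_mem l).2
  omega

theorem stmt12 (d : ℕ) (rc : ℝ) (hrc : 0 < rc) (Dmin : Fin d → ℝ)
    (I : Fin d → ℕ) (hI : ∀ w, 1 ≤ I w) (w : ℕ)
    (x1 x2 : EuclideanSpace ℝ (Fin d))
    (hcell : ∀ l, (iotaVec I w l : ℤ) = ⌊(x1 l - Dmin l) / rc⌋ + 1)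
    (hmove : ‖x2 - x1‖ ≤ rc) :
    (∀ l, 1 ≤ ⌊(x2 l - Dmin l) / rc⌋ - (iotaVec I w l : ℤ) + 3 ∧
        ⌊(x2 l - Dmin l) / rc⌋ - (iotaVec I w l : ℤ) + 3 ≤ 3) ∧
    1 ≤ iotaInv (fun _ : Fin d => 3)
        (fun l => (⌊(x2 l - Dmin l) / rc⌋ - (iotaVec I w l : ℤ) + 3).toNat) ∧
    iotaInv (fun _ : Fin d => 3)
        (fun l => (⌊(x2 l - Dmin l) / rc⌋ - (iotaVec I w l : ℤ) + 3).toNat) ≤ 3 ^ d :=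
  stmt12_general d rc hrc Dmin I w x1 x2 hcell hmove
end

section
/- Fix r_c > 0, D_min, D_max ∈ ℝ^d, and I_w := ⌊(D_max,w − D_min,w)/r_c + 1⌋ for each w. Suppose the new position x² satisfies D_min ≤ x² < D_max componentwise, and let w be a cell with vector index w̲ = ι_I(w), and α̲ := ⌊(x² − D_min)/r_c⌋ − w̲ + 3̲. Then for every coordinate l: if w̲_l = 1 then α̲_l ≠ 1, and if w̲_l = I_l then α̲_l ≠ 3. That is, particles staying inside the domain are never assigned to storage compartments representing cells outside the domain. -/
theorem stmt13 (d : ℕ) (rc : ℝ) (hrc : 0 < rc) (Dmin Dmax : Fin d → ℝ)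
    (I : Fin d → ℤ) (hI : ∀ w, I w = ⌊(Dmax w - Dmin w) / rc + 1⌋)
    (x2 : Fin d → ℝ) (hdom : ∀ l, Dmin l ≤ x2 l ∧ x2 l < Dmax l)
    (wv : Fin d → ℤ) (hwv : ∀ l, 1 ≤ wv l ∧ wv l ≤ I l) :
    ∀ l, (wv l = 1 → ⌊(x2 l - Dmin l) / rc⌋ - wv l + 3 ≠ 1) ∧
      (wv l = I l → ⌊(x2 l - Dmin l) / rc⌋ - wv l + 3 ≠ 3) := by
  intro l
  have h1 : (0 : ℤ) ≤ ⌊(x2 l - Dmin l) / rc⌋ := by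
    apply Int.floor_nonneg.2
    exact div_nonneg (by linarith [(hdom l).1]) hrc.le
  have h2 : ⌊(x2 l - Dmin l) / rc⌋ < I l := by
    rw [hI l]
    have hle : (x2 l - Dmin l) / rc ≤ (Dmax l - Dmin l) / rc :=
      div_le_div_of_nonneg_right (by linarith [(hdom l).2]) hrc.le
    calc ⌊(x2 l - Dmin l) / rc⌋ ≤ ⌊(Dmax l - Dmin l) / rc⌋ := Int.floor_le_floor hle
      _ < ⌊(Dmax l - Dmin l) / rc + 1⌋ := by
          rw [Int.floor_add_one]; omega
  constructor <;> intro h <;> omega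
end

section
/- With ι_I and ι₃ the mixed-radix index transforms for radices I and (3,…,3), and β(w,l) := ι_I⁻¹(ι_I(w) + ι₃(l) − 2̲) (defined when the argument lies in [1̲,I̲]): if a particle with position x is assigned, on process β(w,l), to compartment α = ι₃⁻¹(4̲ − ι₃(l)), i.e., ι₃⁻¹(4̲ − ι₃(l)) = ι₃⁻¹(⌊(x − D_min)/r_c⌋ − ι_I(β(w,l)) + 3̲), then w = ι_I⁻¹(⌊(x − D_min)/r_c⌋ + 1̲). That is, the collect operation places each redistributed particle into exactly the process owning the cell containing its position. -/
/-- scalar index of an integer vectorial index, for radices R. -/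
def iotaInvZ {d : ℕ} (R : Fin d → ℕ) (v : Fin d → ℤ) : ℤ :=
  1 + ∑ l, (v l - 1) * ∏ t ∈ Finset.Iio l, (R t : ℤ)


/-!
`iotaVec I` is, up to the shift by one, Mathlib's mixed-radix bijection `finPiFinEquiv` between
`[1, ∏ I]` and the box `∏ u, [1, I u]`, and `iotaInv I` is its inverse. Hence equal scalar
indices of vectors in the box `[1, 3]^d` force equal vectors, so the assignment gives
`4 - ι₃(l) = c - ι_I(β(w, l)) + 3` coordinatewise, where `c` is the cell of `x`. Since
`ι_I(β(w, l)) = ι_I(w) + ι₃(l) - 2`, this cancels to `c + 1 = ι_I(w)`, and `ι_I⁻¹` gives `w`.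
-/

open Finset

variable {d : ℕ} {I : Fin d → ℕ}

lemma prod_castLE_eq_prodIio (i : Fin d) :
    ∏ j : Fin i, I (Fin.castLE i.is_lt.le j) = prodIio I i := by
  have := prod_map univ (Fin.castLEEmb i.is_lt.le) I
  rw [Fin.coe_castLEEmb] at this
  rw [prodIio, ← this]
  congr 1
  ext t
  simp only [mem_map, mem_univ, true_and, Fin.coe_castLEEmb, mem_Iio]
  exact ⟨fun ⟨a, ha⟩ => ha ▸ a.2, fun h => ⟨⟨t, h⟩, rfl⟩⟩

lemma prodIio_mul_eq_prod_univ {u : Fin d} (hu : u.val = d - 1) :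
    prodIio I u * I u = ∏ v, I v := by
  rw [prodIio, prod_Iio_mul_eq_prod_Iic]
  congr 1
  ext t
  simp only [mem_Iic, mem_univ, iff_true, Fin.le_def]
  omega

lemma iotaInv_succ_val (f : ∀ u, Fin (I u)) :
    iotaInv I (fun u => f u + 1) = finPiFinEquiv f + 1 := by
  simp only [iotaInv, finPiFinEquiv_apply, prod_castLE_eq_prodIio, Nat.add_sub_cancel, add_comm]

/-- The top digit of `iotaVec` is not reduced modulo its radix; on `[1, ∏ I]` this makes no
difference. -/
lemma iotaVec_eq_finPiFinEquiv_symm_s14 {j : ℕ} (hj : 1 ≤ j) (hjI : j ≤ ∏ u, I u) :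
    iotaVec I j =
      fun u => (finPiFinEquiv.symm (⟨j - 1, by omega⟩ : Fin (∏ u, I u)) u : ℕ) + 1 := by
  funext u
  change _ = (j - 1) / (∏ k : Fin u, I (Fin.castLE u.is_lt.le k)) % I u + 1
  rw [prod_castLE_eq_prodIio, iotaVec]
  split_ifs with hu
  · have hlt : j - 1 < prodIio I u * I u := by rw [prodIio_mul_eq_prod_univ hu]; omega
    rw [Nat.mod_eq_of_lt (Nat.div_lt_of_lt_mul hlt)]
  · rw [← Nat.div_div_eq_div_mul, Nat.mod_def, Nat.mul_comm]

lemma iotaVec_mem_Icc {j : ℕ} (hj : 1 ≤ j) (hjI : j ≤ ∏ u, I u) (u : Fin d) :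
    1 ≤ iotaVec I j u ∧ iotaVec I j u ≤ I u := by
  rw [iotaVec_eq_finPiFinEquiv_symm_s14 hj hjI]
  exact ⟨Nat.le_add_left 1 _, Fin.is_lt _⟩

lemma iotaInv_iotaVec {j : ℕ} (hj : 1 ≤ j) (hjI : j ≤ ∏ u, I u) :
    iotaInv I (iotaVec I j) = j := by
  rw [iotaVec_eq_finPiFinEquiv_symm_s14 hj hjI, iotaInv_succ_val, Equiv.apply_symm_apply]
  exact Nat.sub_add_cancel hj

lemma iotaVec_iotaInv {v : Fin d → ℕ} (hv : ∀ u, 1 ≤ v u ∧ v u ≤ I u) :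
    iotaVec I (iotaInv I v) = v := by
  set f : ∀ u, Fin (I u) := fun u => ⟨v u - 1, by have := hv u; omega⟩
  have hvf : v = fun u => (f u : ℕ) + 1 := funext fun u => by have := hv u; simp only [f]; omega
  rw [hvf, iotaInv_succ_val,
    iotaVec_eq_finPiFinEquiv_symm_s14 (Nat.le_add_left 1 _) (finPiFinEquiv f).is_lt]
  simp only [Nat.add_sub_cancel, Fin.eta, Equiv.symm_apply_apply]

lemma iotaInvZ_natCast {v : Fin d → ℕ} (hv : ∀ u, 1 ≤ v u) :
    iotaInvZ I (fun u => (v u : ℤ)) = iotaInv I v := by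
  simp only [iotaInvZ, iotaInv, prodIio, Nat.cast_add, Nat.cast_one, Nat.cast_sum, Nat.cast_mul,
    Nat.cast_sub (hv _), Nat.cast_prod]

lemma iotaInvZ_injOn {v v' : Fin d → ℤ} (hv : ∀ u, 1 ≤ v u ∧ v u ≤ I u)
    (hv' : ∀ u, 1 ≤ v' u ∧ v' u ≤ I u) (h : iotaInvZ I v = iotaInvZ I v') : v = v' := by
  lift v to Fin d → ℕ using fun u => by linarith [hv u]
  lift v' to Fin d → ℕ using fun u => by linarith [hv' u]
  simp only [Nat.one_le_cast, Nat.cast_le] at hv hv'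
  rw [iotaInvZ_natCast fun u => (hv u).1, iotaInvZ_natCast fun u => (hv' u).1, Nat.cast_inj] at h
  rw [← iotaVec_iotaInv hv, ← iotaVec_iotaInv hv', h]

theorem stmt14_general (d : ℕ) (I : Fin d → ℕ)
    (rc : ℝ) (Dmin : Fin d → ℝ)
    (w l : ℕ) (hw : 1 ≤ w ∧ w ≤ ∏ u, I u) (hl : 1 ≤ l ∧ l ≤ 3 ^ d)
    (hbeta : betaDef I w l)
    (x : Fin d → ℝ)
    (hrange : ∀ u, 1 ≤ ⌊(x u - Dmin u) / rc⌋ - (iotaVec I (beta I w l) u : ℤ) + 3 ∧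
        ⌊(x u - Dmin u) / rc⌋ - (iotaVec I (beta I w l) u : ℤ) + 3 ≤ 3)
    (hassign : iotaInvZ (fun _ => 3) (fun u => 4 - (iota3 d l u : ℤ)) =
      iotaInvZ (fun _ => 3)
        (fun u => ⌊(x u - Dmin u) / rc⌋ - (iotaVec I (beta I w l) u : ℤ) + 3)) :
    (w : ℤ) = iotaInvZ I (fun u => ⌊(x u - Dmin u) / rc⌋ + 1) := by
  have hw_digits := iotaVec_mem_Icc hw.1 hw.2
  have hl_digits : ∀ u, 1 ≤ iota3 d l u ∧ iota3 d l u ≤ 3 :=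
    iotaVec_mem_Icc hl.1 (by simpa using hl.2)
  have hβ : iotaVec I (beta I w l) = betaVec I w l := iotaVec_iotaInv hbeta
  have hcompartment :=
    iotaInvZ_injOn (fun u => by have := hl_digits u; push_cast; omega) hrange hassign
  have hcell : (fun u => ⌊(x u - Dmin u) / rc⌋ + 1) = fun u => (iotaVec I w u : ℤ) := by
    funext u
    have h := congrFun hcompartment u
    have := hw_digits u
    have := hl_digits u
    simp only [hβ, betaVec] at h
    omega
  rw [hcell, iotaInvZ_natCast fun u => (hw_digits u).1, iotaInv_iotaVec hw.1 hw.2]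

theorem stmt14 (d : ℕ) (hd : 1 ≤ d) (I : Fin d → ℕ) (hI : ∀ u, 1 ≤ I u)
    (rc : ℝ) (hrc : 0 < rc) (Dmin : Fin d → ℝ)
    (w l : ℕ) (hw : 1 ≤ w ∧ w ≤ ∏ u, I u) (hl : 1 ≤ l ∧ l ≤ 3 ^ d)
    (hbeta : betaDef I w l)
    (x : Fin d → ℝ)
    (hrange : ∀ u, 1 ≤ ⌊(x u - Dmin u) / rc⌋ - (iotaVec I (beta I w l) u : ℤ) + 3 ∧
        ⌊(x u - Dmin u) / rc⌋ - (iotaVec I (beta I w l) u : ℤ) + 3 ≤ 3)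
    (hassign : iotaInvZ (fun _ => 3) (fun u => 4 - (iota3 d l u : ℤ)) =
      iotaInvZ (fun _ => 3)
        (fun u => ⌊(x u - Dmin u) / rc⌋ - (iotaVec I (beta I w l) u : ℤ) + 3)) :
    (w : ℤ) = iotaInvZ I (fun u => ⌊(x u - Dmin u) / rc⌋ + 1) :=
  stmt14_general d I rc Dmin w l hw hl hbeta x hrange hassign
end

section
/- Suppose particles are distributed to cells by position: cell w = ι_I⁻¹(⌊(x_j − D_min)/r_c⌋ + 1̲) contains particle p_j, and the d-dimensional storage of process w after copying holds all particles with positions in [(ι_I(w) − 2̲)·r_c + D_min, (ι_I(w) + 1̲)·r_c + D_min) ∩ [D_min, D_max). Then for any particle p_k in cell w and any particle p_j with |x_k − x_j| ≤ r_c (Euclidean norm) and x_j ∈ [D_min, D_max), the position x_j lies in the storage region of process w. Hence after the copy step, all cutoff-radius neighbors of every particle in the center compartment are in process-local memory. -/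
lemma coord_le_norm {d : ℕ} (y : EuclideanSpace ℝ (Fin d)) (u : Fin d) :
    |y u| ≤ ‖y‖ := by
  rw [EuclideanSpace.norm_eq]
  have h1 : |y u| = Real.sqrt (‖y u‖ ^ 2) := by
    rw [Real.sqrt_sq_eq_abs]; simp [Real.norm_eq_abs]
  rw [h1]
  apply Real.sqrt_le_sqrt
  exact Finset.single_le_sum (f := fun i => ‖y i‖ ^ 2)
    (fun i _ => by positivity) (Finset.mem_univ u)

theorem stmt17 (d : ℕ) (rc : ℝ) (hrc : 0 < rc) (Dmin Dmax : Fin d → ℝ)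
    (I : Fin d → ℕ) (hI : ∀ u, (I u : ℤ) = ⌊(Dmax u - Dmin u) / rc + 1⌋)
    (w : ℕ) (xk xj : EuclideanSpace ℝ (Fin d))
    (hcell : ∀ u, ((iotaVec I w u : ℝ) - 1) * rc + Dmin u ≤ xk u ∧
        xk u < (iotaVec I w u : ℝ) * rc + Dmin u)
    (hnb : ‖xk - xj‖ ≤ rc)
    (hdom : ∀ u, Dmin u ≤ xj u ∧ xj u < Dmax u) :
    ∀ u, (((iotaVec I w u : ℝ) - 2) * rc + Dmin u ≤ xj u ∧
        xj u < ((iotaVec I w u : ℝ) + 1) * rc + Dmin u) ∧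
      (Dmin u ≤ xj u ∧ xj u < Dmax u) := by
  intro u
  have h := (coord_le_norm (xk - xj) u).trans hnb
  have h2 : (xk - xj) u = xk u - xj u := rfl
  rw [h2, abs_le] at h
  obtain ⟨h1c, h2c⟩ := hcell u
  refine ⟨⟨?_, ?_⟩, hdom u⟩ <;> nlinarith [h.1, h.2]
end

section
/- If x_k ∈ [(w̲ − 1̲)·r_c + D_min, w̲·r_c + D_min) componentwise (particle in cell w̲) and ‖x_j − x_k‖₂ ≤ r_c, then x_j ∈ [(w̲ − 2̲)·r_c + D_min, (w̲ + 1̲)·r_c + D_min) componentwise. That is, any neighbor within the cutoff radius of a particle in a cell lies within the 3^d block of that cell and its direct neighbors. -/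
theorem stmt18 (d : ℕ) (rc : ℝ) (hrc : 0 < rc) (Dmin : Fin d → ℝ)
    (wv : Fin d → ℤ) (xk xj : EuclideanSpace ℝ (Fin d))
    (hcell : ∀ u, ((wv u : ℝ) - 1) * rc + Dmin u ≤ xk u ∧
        xk u < (wv u : ℝ) * rc + Dmin u)
    (hnb : ‖xj - xk‖ ≤ rc) :
    ∀ u, ((wv u : ℝ) - 2) * rc + Dmin u ≤ xj u ∧
      xj u < ((wv u : ℝ) + 1) * rc + Dmin u := by
  intro u
  have h1 : |xj u - xk u| ≤ ‖xj - xk‖ := by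
    have hv : ((xj - xk) : EuclideanSpace ℝ (Fin d)) u = xj u - xk u := rfl
    rw [EuclideanSpace.norm_eq]
    rw [show |xj u - xk u| = Real.sqrt (‖(xj - xk) u‖ ^ 2) by
      rw [Real.sqrt_sq_eq_abs, hv]; simp [abs_abs]]
    apply Real.sqrt_le_sqrt
    exact Finset.single_le_sum (f := fun i => ‖(xj - xk) i‖ ^ 2) (fun i _ => by positivity) (Finset.mem_univ u)
  have h2 : |xj u - xk u| ≤ rc := h1.trans hnb
  have := abs_le.mp h2
  have hc := hcell u
  constructor <;> nlinarith [this.1, this.2, hc.1, hc.2]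
end

section
/- Let n_CPU, N_cell, d be positive integers with 3^d dividing N_cell, and define Ξ_calc(N_cell, n_CPU, d) = ⌈3^d/n_CPU⌉·(N_cell/3^d) for 1 ≤ n_CPU ≤ 3^d, = ⌈N_cell/(3^d·⌊n_CPU/3^d⌋)⌉ for 3^d ≤ n_CPU ≤ N_cell, and = 1 for n_CPU > N_cell. Then Ξ_calc is monotonically non-increasing in n_CPU, satisfies Ξ_calc(N_cell, 1, d) = N_cell, and Ξ_calc(N_cell, n_CPU, d) ≥ ⌈N_cell/n_CPU⌉ for all n_CPU ≤ N_cell (the checkerboard constraint can only worsen load balance relative to ideal). -/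
/-! In each regime `XiCalc` is a ceiling division `⌈/⌉`: for `n ≤ 3^d` the `3^d` checkerboard
colours are spread over `n` processors, for `3^d ≤ n ≤ N` the `N` cells over the
`3^d ⌊n / 3^d⌋` processors that can be used on whole colour classes. Since `b ↦ a ⌈/⌉ b` is
antitone, so is `XiCalc` on each regime; the regimes are glued at `n = 3^d`, where both formulas
give `N / 3^d`, and at `n = N`, past which the value is `1`, a lower bound everywhere. Writing
`N = 3^d k`, the comparison with `N ⌈/⌉ n` is `(3^d k) ⌈/⌉ n ≤ (3^d ⌈/⌉ n) k` in the first regime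
and antitonicity again in the second, as `3^d ⌊n / 3^d⌋ ≤ n`.

On `ℕ`, `a ⌈/⌉ b` is by definition `(a + b - 1) / b`, the form in which `XiCalc` is written. -/

/-- upper bound on the number of cell-processes executed by one processor. -/
def XiCalc (Ncell nCPU d : ℕ) : ℕ :=
  if nCPU ≤ 3 ^ d then (3 ^ d + nCPU - 1) / nCPU * (Ncell / 3 ^ d)
  else if nCPU ≤ Ncell then
    (Ncell + 3 ^ d * (nCPU / 3 ^ d) - 1) / (3 ^ d * (nCPU / 3 ^ d))
  else 1

namespace Nat

lemma ceilDiv_le_ceilDiv_of_le {a b b' : ℕ} (hb : 0 < b) (h : b ≤ b') :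
    a ⌈/⌉ b' ≤ a ⌈/⌉ b :=
  (ceilDiv_le_iff_le_mul (hb.trans_le h)).2 <|
    ((ceilDiv_le_iff_le_mul hb).1 le_rfl).trans (Nat.mul_le_mul_right _ h)

lemma one_le_ceilDiv {a b : ℕ} (ha : 0 < a) (hb : 0 < b) : 1 ≤ a ⌈/⌉ b := by
  by_contra! h
  have := (ceilDiv_le_iff_le_mul hb).1 (Nat.lt_one_iff.1 h).le
  omega

lemma mul_ceilDiv_le_ceilDiv_mul {a b : ℕ} (hb : 0 < b) (k : ℕ) :
    (a * k) ⌈/⌉ b ≤ a ⌈/⌉ b * k :=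
  (ceilDiv_le_iff_le_mul hb).2 <| by
    rw [← Nat.mul_assoc]
    exact Nat.mul_le_mul_right _ ((ceilDiv_le_iff_le_mul hb).1 le_rfl)

end Nat

section XiCalc

variable {N n d : ℕ}

lemma xiCalc_of_le_pow (h : n ≤ 3 ^ d) : XiCalc N n d = 3 ^ d ⌈/⌉ n * (N / 3 ^ d) :=
  if_pos h

lemma xiCalc_of_pow_le_of_le (hdvd : 3 ^ d ∣ N) (h₁ : 3 ^ d ≤ n) (h₂ : n ≤ N) :
    XiCalc N n d = N ⌈/⌉ (3 ^ d * (n / 3 ^ d)) := by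
  have hP : 0 < 3 ^ d := by positivity
  rcases h₁.lt_or_eq with h₁ | rfl
  · exact (if_neg h₁.not_ge).trans (if_pos h₂)
  · obtain ⟨k, rfl⟩ := hdvd
    have hcancel (j : ℕ) : 3 ^ d * j ⌈/⌉ 3 ^ d = j := smul_ceilDiv hP j
    have hself : 3 ^ d ⌈/⌉ 3 ^ d = 1 := by simpa using hcancel 1
    rw [xiCalc_of_le_pow le_rfl, Nat.div_self hP, Nat.mul_one, hcancel,
      Nat.mul_div_cancel_left k hP, hself, Nat.one_mul]

lemma xiCalc_of_lt (hPN : 3 ^ d ≤ N) (h : N < n) : XiCalc N n d = 1 :=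
  (if_neg (by omega)).trans (if_neg h.not_ge)

lemma xiCalc_one (hdvd : 3 ^ d ∣ N) : XiCalc N 1 d = N := by
  rw [xiCalc_of_le_pow (Nat.one_le_pow _ _ (by norm_num)), ceilDiv_one,
    Nat.mul_div_cancel' hdvd]

lemma one_le_xiCalc (hPN : 3 ^ d ≤ N) (hn : 0 < n) : 1 ≤ XiCalc N n d := by
  have hP : 0 < 3 ^ d := by positivity
  unfold XiCalc
  split_ifs with h₁ h₂
  · exact Nat.one_le_iff_ne_zero.2 <| Nat.mul_ne_zero
      (Nat.one_le_iff_ne_zero.1 (Nat.one_le_ceilDiv hP hn)) (Nat.div_pos hPN hP).ne'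
  · exact Nat.one_le_ceilDiv (by omega) (Nat.mul_pos hP (Nat.div_pos (by omega) hP))
  · exact le_rfl

lemma xiCalc_antitoneOn_Icc_one_pow : AntitoneOn (XiCalc N · d) (Set.Icc 1 (3 ^ d)) := by
  intro m hm n hn hmn
  simp only [xiCalc_of_le_pow hm.2, xiCalc_of_le_pow hn.2]
  exact Nat.mul_le_mul_right _ (Nat.ceilDiv_le_ceilDiv_of_le hm.1 hmn)

lemma xiCalc_antitoneOn_Icc_pow (hdvd : 3 ^ d ∣ N) :
    AntitoneOn (XiCalc N · d) (Set.Icc (3 ^ d) N) := by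
  intro m hm n hn hmn
  have hP : 0 < 3 ^ d := by positivity
  simp only [xiCalc_of_pow_le_of_le hdvd hm.1 hm.2, xiCalc_of_pow_le_of_le hdvd hn.1 hn.2]
  exact Nat.ceilDiv_le_ceilDiv_of_le (Nat.mul_pos hP (Nat.div_pos hm.1 hP))
    (Nat.mul_le_mul_left _ (Nat.div_le_div_right hmn))

lemma xiCalc_antitone (hN : 0 < N) (hdvd : 3 ^ d ∣ N) {m n : ℕ} (hm : 0 < m) (hmn : m ≤ n) :
    XiCalc N n d ≤ XiCalc N m d := by
  have hPN : 3 ^ d ≤ N := Nat.le_of_dvd hN hdvd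
  have hP : 0 < 3 ^ d := by positivity
  rcases lt_or_ge N n with hNn | hnN
  · exact (xiCalc_of_lt hPN hNn).trans_le (one_le_xiCalc hPN hm)
  rcases le_or_gt n (3 ^ d) with hnP | hPn
  · exact xiCalc_antitoneOn_Icc_one_pow ⟨hm, hmn.trans hnP⟩ ⟨hm.trans_le hmn, hnP⟩ hmn
  rcases le_or_gt (3 ^ d) m with hPm | hmP
  · exact xiCalc_antitoneOn_Icc_pow hdvd ⟨hPm, hmn.trans hnN⟩ ⟨hPm.trans hmn, hnN⟩ hmn
  calc XiCalc N n d ≤ XiCalc N (3 ^ d) d :=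
        xiCalc_antitoneOn_Icc_pow hdvd ⟨le_rfl, hPN⟩ ⟨hPn.le, hnN⟩ hPn.le
    _ ≤ XiCalc N m d := xiCalc_antitoneOn_Icc_one_pow ⟨hm, hmP.le⟩ ⟨hP, le_rfl⟩ hmP.le

lemma ceilDiv_le_xiCalc (hdvd : 3 ^ d ∣ N) (hn : 0 < n) (hnN : n ≤ N) :
    N ⌈/⌉ n ≤ XiCalc N n d := by
  have hP : 0 < 3 ^ d := by positivity
  rcases le_or_gt n (3 ^ d) with hnP | hPn
  · rw [xiCalc_of_le_pow hnP]
    conv_lhs => rw [← Nat.mul_div_cancel' hdvd]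
    exact Nat.mul_ceilDiv_le_ceilDiv_mul hn _
  · rw [xiCalc_of_pow_le_of_le hdvd hPn.le hnN]
    exact Nat.ceilDiv_le_ceilDiv_of_le (Nat.mul_pos hP (Nat.div_pos hPn.le hP))
      (Nat.mul_div_le n _)

end XiCalc

theorem stmt19_general (Ncell d : ℕ) (hN : 0 < Ncell)
    (hdvd : 3 ^ d ∣ Ncell) :
    (∀ m n : ℕ, 0 < m → m ≤ n → XiCalc Ncell n d ≤ XiCalc Ncell m d) ∧
    XiCalc Ncell 1 d = Ncell ∧
    (∀ n : ℕ, 0 < n → n ≤ Ncell → (Ncell + n - 1) / n ≤ XiCalc Ncell n d) :=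
  ⟨fun _ _ hm hmn => xiCalc_antitone hN hdvd hm hmn, xiCalc_one hdvd,
    fun _ hn hnN => ceilDiv_le_xiCalc hdvd hn hnN⟩

theorem stmt19 (Ncell d : ℕ) (hN : 0 < Ncell) (hd : 0 < d)
    (hdvd : 3 ^ d ∣ Ncell) :
    (∀ m n : ℕ, 0 < m → m ≤ n → XiCalc Ncell n d ≤ XiCalc Ncell m d) ∧
    XiCalc Ncell 1 d = Ncell ∧
    (∀ n : ℕ, 0 < n → n ≤ Ncell → (Ncell + n - 1) / n ≤ XiCalc Ncell n d) :=
  stmt19_general Ncell d hN hdvd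
end
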